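/- arXiv:1901.04750 — 4 statements merged into one kernel-verified Lean document; each statement's English description precedes it below -/
import Mathlib

section
/- A set P of elements of Cantor space is nowhere dense if and only if there exist a point z in Cantor space and a strictly increasing sequence (k_n)_{n∈ℕ} of natural numbers such that for every n, no element of P agrees with z on the block [k_n, k_{n+1}); that is, {x : x(i) = z(i) for all i with k_n ≤ i < k_{n+1}} ∩ P = ∅ for every n. -/
open Set PiNat

lemma density_step {Q : Set (ℕ → Bool)} (hQc : IsClosed Q) (hQi : interior Q = ∅)
    (y : ℕ → Bool) (b : ℕ) :
    ∃ y' : ℕ → Bool, (∀ i < b, y' i = y i) ∧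
      ∃ m, b ≤ m ∧ ∀ x : ℕ → Bool, (∀ i < m, x i = y' i) → x ∉ Q := by
  have hdense : Dense Qᶜ := by
    rwa [← interior_eq_empty_iff_dense_compl]
  obtain ⟨y', hy'c, hy'Q⟩ : (cylinder y b ∩ Qᶜ).Nonempty := by
    exact hdense.inter_open_nonempty (cylinder y b) (isOpen_cylinder (fun _ : ℕ => Bool) y b)
      ⟨y, self_mem_cylinder y b⟩
  obtain ⟨s, ⟨x, n, rfl⟩, hy's, hsub⟩ :=
    (isTopologicalBasis_cylinders (fun _ : ℕ => Bool)).exists_subset_of_mem_open hy'Q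
      hQc.isOpen_compl
  refine ⟨y', fun i hi => hy'c i hi, max b n, le_max_left _ _, fun z hz hzQ => ?_⟩
  have hz' : z ∈ cylinder y' (max b n) := fun i hi => hz i hi
  have : z ∈ cylinder x n := by
    rw [← mem_cylinder_iff_eq.1 hy's]
    exact cylinder_anti y' (le_max_right b n) hz'
  exact hsub this hzQ

-- iterate over a list of prefixes of length a
lemma block_list {Q : Set (ℕ → Bool)} (hQc : IsClosed Q) (hQi : interior Q = ∅) (a : ℕ)
    (L : List (Fin a → Bool)) :
    ∃ b, a ≤ b ∧ ∃ w : ℕ → Bool, ∀ s ∈ L, ∀ x : ℕ → Bool,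
      (∀ i : ℕ, (h : i < a) → x i = s ⟨i, h⟩) →
      (∀ i, a ≤ i → i < b → x i = w i) → x ∉ Q := by
  induction L with
  | nil => exact ⟨a, le_rfl, fun _ => false, by simp⟩
  | cons s L ih =>
    obtain ⟨b, hab, w, hw⟩ := ih
    set y : ℕ → Bool := fun i => if h : i < a then s ⟨i, h⟩ else w i with hy
    obtain ⟨y', hy'y, m, hbm, hm⟩ := density_step hQc hQi y b
    refine ⟨m, hab.trans hbm, y', ?_⟩
    intro t ht x hxa hxb
    rcases List.mem_cons.1 ht with rfl | htL
    · apply hm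
      intro i hi
      rcases lt_or_ge i a with h | h
      · rw [hxa i h, hy'y i (h.trans_le hab)]
        simp [hy, h]
      · exact hxb i h hi
    · refine hw t htL x hxa fun i hia hib => ?_
      rw [hxb i hia (hib.trans_le hbm), hy'y i hib]
      simp [hy, not_lt.2 hia]

lemma blockA {Q : Set (ℕ → Bool)} (hQc : IsClosed Q) (hQi : interior Q = ∅) (a : ℕ) :
    ∃ b, a < b ∧ ∃ w : ℕ → Bool, ∀ x : ℕ → Bool,
      (∀ i, a ≤ i → i < b → x i = w i) → x ∉ Q := by
  obtain ⟨b, hab, w, hw⟩ := block_list hQc hQi a (Finset.univ : Finset (Fin a → Bool)).toList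
  refine ⟨max b (a + 1), lt_of_lt_of_le (Nat.lt_succ_self a) (le_max_right _ _), w, fun x hx => ?_⟩
  exact hw (fun i => x i) (by simp) x (fun i h => rfl)
    (fun i hia hib => hx i hia (hib.trans_le (le_max_left _ _)))

/-- A set `P` in Cantor space `2^ω` is nowhere dense iff there are `z ∈ 2^ω` and a
strictly increasing sequence `k` of naturals such that for every `n`, no element of `P`
agrees with `z` on the block `[k n, k (n+1))`. -/
theorem nowhereDense_iff_blocks (P : Set (ℕ → Bool)) :
    IsNowhereDense P ↔
      ∃ (z : ℕ → Bool) (k : ℕ → ℕ), StrictMono k ∧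
        ∀ n : ℕ,
          {x : ℕ → Bool | ∀ i : ℕ, k n ≤ i → i < k (n + 1) → x i = z i} ∩ P = ∅ := by
  constructor
  · intro hP
    have hQc : IsClosed (closure P) := isClosed_closure
    have hQi : interior (closure P) = ∅ := hP
    choose B hB W hW using fun a => blockA hQc hQi a
    set k : ℕ → ℕ := fun n => Nat.rec 0 (fun _ b => B b) n with hk
    have hk0 : k 0 = 0 := rfl
    have hksucc : ∀ n, k (n + 1) = B (k n) := fun n => rfl
    have hkmono : StrictMono k := strictMono_nat_of_lt_succ fun n => by
      rw [hksucc]; exact hB (k n)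
    have hex : ∀ i : ℕ, ∃ n, i < k (n + 1) := fun i =>
      ⟨i, lt_of_lt_of_le (Nat.lt_succ_self i) (hkmono.le_apply)⟩
    set z : ℕ → Bool := fun i => W (k (Nat.find (hex i))) i with hz
    refine ⟨z, k, hkmono, fun n => ?_⟩
    rw [Set.eq_empty_iff_forall_notMem]
    rintro x ⟨hx, hxP⟩
    have key : ∀ i, k n ≤ i → i < k (n + 1) → z i = W (k n) i := by
      intro i hni hin
      have hfind : Nat.find (hex i) = n := by
        rw [Nat.find_eq_iff]
        exact ⟨hin, fun m hm => not_lt.2 (le_trans (hkmono.monotone hm) hni)⟩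
      simp only [hz, hfind]
    have : x ∉ closure P := by
      apply hW (k n)
      intro i hni hin
      have hin' : i < k (n + 1) := by rw [hksucc]; exact hin
      rw [hx i hni hin', key i hni hin']
    exact this (subset_closure hxP)
  · rintro ⟨z, k, hk, hblock⟩
    show interior (closure P) = ∅
    rw [Set.eq_empty_iff_forall_notMem]
    intro x hx
    obtain ⟨s, ⟨y, m, rfl⟩, hxs, hsub⟩ :=
      (isTopologicalBasis_cylinders (fun _ : ℕ => Bool)).exists_subset_of_mem_open hx
        isOpen_interior
    set Cn : Set (ℕ → Bool) :=
      {x : ℕ → Bool | ∀ i : ℕ, k m ≤ i → i < k (m + 1) → x i = z i} with hCn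
    have hCopen : IsOpen Cn := by
      have : Cn = ⋂ i ∈ Finset.Ico (k m) (k (m + 1)), {x : ℕ → Bool | x i = z i} := by
        ext x; simp [hCn]
      rw [this]
      refine isOpen_biInter_finset fun i _ => ?_
      have : {x : ℕ → Bool | x i = z i} = (fun p : ℕ → Bool => p i) ⁻¹' {z i} := rfl
      rw [this]
      exact (isOpen_discrete {z i}).preimage (continuous_apply i)
    have hCcl : closure P ∩ Cn = ∅ := by
      rw [Set.eq_empty_iff_forall_notMem]
      rintro v ⟨hv1, hv2⟩
      have : closure P ⊆ Cnᶜ :=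
        closure_minimal (fun p hp hpC => (Set.eq_empty_iff_forall_notMem.1 (hblock m)) p
          ⟨hpC, hp⟩) hCopen.isClosed_compl
      exact this hv1 hv2
    set w : ℕ → Bool := fun i => if i < k m then y i else z i with hwdef
    have hwC : w ∈ Cn := by
      intro i h1 h2
      simp [hwdef, not_lt.2 h1]
    have hwcl : w ∈ closure P := by
      apply interior_subset
      apply hsub
      intro i hi
      have him : i < k m := lt_of_lt_of_le hi hk.le_apply
      simp [hwdef, him]
    exact (Set.eq_empty_iff_forall_notMem.1 hCcl) w ⟨hwcl, hwC⟩
end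

section
/- A set B ⊆ ℝ is a Burstin basis (i.e., B is simultaneously a Hamel basis and a Bernstein set) if and only if B is a Hamel basis and B ∩ P ≠ ∅ for every nonempty perfect set P ⊆ ℝ. In particular, if B is a Hamel basis which meets every nonempty perfect subset of ℝ, then also P \ B ≠ ∅ for every nonempty perfect P ⊆ ℝ. -/
/-!
If a nonempty perfect set `P` were contained in a linearly independent set `B` meeting every
nonempty perfect set, then the perfect set `2⁻¹ • P` would meet `B` in some `b`, putting both `b`
and `2 • b` in `B`.
-/

/-- `B` is a Hamel basis: a basis of `ℝ` as a vector space over `ℚ`. -/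
def IsHamelBasis (B : Set ℝ) : Prop :=
  LinearIndependent ℚ ((↑) : B → ℝ) ∧ Submodule.span ℚ B = ⊤

/-- `B` is a Bernstein set: it meets every nonempty perfect set and misses a point
of every nonempty perfect set. -/
def IsBernsteinSet (B : Set ℝ) : Prop :=
  ∀ P : Set ℝ, Perfect P → P.Nonempty → (B ∩ P).Nonempty ∧ (P \ B).Nonempty

open Pointwise

theorem Perfect.image_homeomorph {X Y : Type*} [TopologicalSpace X] [TopologicalSpace Y]
    (e : X ≃ₜ Y) {C : Set X} (hC : Perfect C) : Perfect (e '' C) := by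
  refine ⟨e.isClosedMap C hC.closed, ?_⟩
  rintro _ ⟨x, hx, rfl⟩
  simpa only [Filter.map_principal] using
    (hC.acc x hx).map e.continuous.continuousAt e.injective

theorem Perfect.smul_of_ne_zero {K V : Type*} [DivisionRing K] [AddCommGroup V] [Module K V]
    [TopologicalSpace V] [ContinuousConstSMul K V] {C : Set V} (hC : Perfect C) {c : K}
    (hc : c ≠ 0) : Perfect (c • C) := by
  rw [← Set.image_smul]
  exact hC.image_homeomorph (Homeomorph.smulOfNeZero c hc)

theorem LinearIndepOn.eq_one_of_smul_mem {K V : Type*} [DivisionRing K] [AddCommGroup V]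
    [Module K V] {s : Set V} (hs : LinearIndepOn K id s) {x : V} {c : K} (hx : x ∈ s)
    (hcx : c • x ∈ s) : c = 1 := by
  by_contra hc
  have hx0 : x ≠ 0 := hs.ne_zero hx
  have hne : x ≠ c • x := fun h ↦ by
    have : (c - 1) • x = 0 := by rw [sub_smul, one_smul, ← h, sub_self]
    exact hx0 <| (smul_eq_zero.1 this).resolve_left (sub_ne_zero.2 hc)
  have hpair := (LinearIndepOn.pair_iff id hne).1 (hs.mono (Set.pair_subset hx hcx))
  simpa using (hpair c (-1) (by simp)).2

theorem Perfect.diff_nonempty_of_linearIndepOn {K V : Type*} [DivisionRing K] [CharZero K]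
    [AddCommGroup V] [Module K V] [TopologicalSpace V] [ContinuousConstSMul K V] {B : Set V}
    (hB : LinearIndepOn K id B) (hmeet : ∀ P : Set V, Perfect P → P.Nonempty → (B ∩ P).Nonempty)
    {P : Set V} (hP : Perfect P) (hne : P.Nonempty) : (P \ B).Nonempty := by
  by_contra! hPB
  rw [Set.sdiff_eq_empty] at hPB
  have h2 : (2 : K)⁻¹ ≠ 0 := by simp
  obtain ⟨_, hb, p, hp, rfl⟩ := hmeet _ (hP.smul_of_ne_zero h2) hne.smul_set
  have : (2 : K) = 1 := hB.eq_one_of_smul_mem hb (by simpa [smul_smul] using hPB hp)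
  norm_num at this

/-- `B` is a Burstin basis iff `B` is a Hamel basis meeting every nonempty perfect set;
in particular, a Hamel basis meeting every nonempty perfect set also omits a point of
every nonempty perfect set. -/
theorem burstin_basis_iff (B : Set ℝ) :
    ((IsHamelBasis B ∧ IsBernsteinSet B) ↔
      (IsHamelBasis B ∧ ∀ P : Set ℝ, Perfect P → P.Nonempty → (B ∩ P).Nonempty)) ∧
    (IsHamelBasis B → (∀ P : Set ℝ, Perfect P → P.Nonempty → (B ∩ P).Nonempty) →
      ∀ P : Set ℝ, Perfect P → P.Nonempty → (P \ B).Nonempty) := by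
  have hmiss : IsHamelBasis B → (∀ P : Set ℝ, Perfect P → P.Nonempty → (B ∩ P).Nonempty) →
      ∀ P : Set ℝ, Perfect P → P.Nonempty → (P \ B).Nonempty :=
    fun hH hmeet _ hP hne ↦ hP.diff_nonempty_of_linearIndepOn (K := ℚ) hH.1 hmeet hne
  refine ⟨⟨fun ⟨hH, hBern⟩ ↦ ⟨hH, fun P hP hne ↦ (hBern P hP hne).1⟩, fun ⟨hH, hmeet⟩ ↦ ?_⟩, hmiss⟩
  exact ⟨hH, fun P hP hne ↦ ⟨hmeet P hP hne, hmiss hH hmeet P hP hne⟩⟩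
end

section
/- Let B be a Hamel basis of ℝ (a basis of ℝ as a ℚ-vector space), and let b₀ ∈ B be an element whose coefficient in the unique representation of the real number 1 as a finite rational linear combination of elements of B is nonzero. Then the set V = span_ℚ(B \ {b₀}) is a Vitali set: for every x ∈ ℝ there exists exactly one v ∈ V such that x − v ∈ ℚ. -/
/-!
The coordinate functional of `b₀` with respect to the Hamel basis has kernel
`span ℚ (B \ {b₀})` and does not vanish at `1`, so its kernel is a complement of `ℚ ∙ 1 = ℚ`
in `ℝ`. Each real therefore splits uniquely as an element of the span plus a rational.
-/

open Submodule

theorem Submodule.existsUnique_mem_sub_mem_of_isCompl {R M : Type*} [Ring R] [AddCommGroup M]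
    [Module R M] {p q : Submodule R M} (h : IsCompl p q) (x : M) :
    ∃! v, v ∈ p ∧ x - v ∈ q := by
  obtain ⟨u, w, huw, huniq⟩ := p.existsUnique_add_of_isCompl h x
  refine ⟨u, ⟨u.2, by simp [← huw]⟩, ?_⟩
  rintro v ⟨hv, hxv⟩
  exact congrArg Subtype.val (huniq ⟨v, hv⟩ ⟨x - v, hxv⟩ (add_sub_cancel v x)).1

theorem LinearMap.isCompl_ker_span_singleton {K M : Type*} [DivisionRing K] [AddCommGroup M]
    [Module K M] {f : M →ₗ[K] K} {e : M} (he : f e ≠ 0) : IsCompl (ker f) (K ∙ e) :=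
  isCompl_span_singleton_of_isCoatom_of_notMem
    (isCoatom_ker_of_surjective (surjective_of_ne_zero (ne_of_apply_ne (· e) he))) he

theorem Module.Basis.span_image_compl_singleton {ι R M : Type*} [Semiring R] [AddCommMonoid M]
    [Module R M] (b : Basis ι R M) (i : ι) : span R (b '' {i}ᶜ) = LinearMap.ker (b.coord i) := by
  ext m
  simp [b.mem_span_image, Set.subset_compl_singleton_iff]

/-- If `B` is a Hamel basis of `ℝ` and `b₀ ∈ B` has nonzero coefficient in the (unique)
representation of `1` as a finite rational linear combination of elements of `B`, then
`span ℚ (B \ {b₀})` is a Vitali set: every real is Vitali-equivalent to exactly one of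
its members. -/
theorem span_erase_hamel_basis_is_vitali (B : Set ℝ)
    (hind : LinearIndependent ℚ ((↑) : B → ℝ))
    (hspan : Submodule.span ℚ B = ⊤)
    (b₀ : ℝ) (hb₀ : b₀ ∈ B)
    (c : B →₀ ℚ)
    (hc : Finsupp.linearCombination ℚ ((↑) : B → ℝ) c = 1)
    (hc₀ : c ⟨b₀, hb₀⟩ ≠ 0) :
    ∀ x : ℝ, ∃! v : ℝ,
      v ∈ Submodule.span ℚ (B \ {b₀}) ∧ ∃ q : ℚ, x - v = (q : ℝ) := by
  let b := Module.Basis.mk hind (by rw [Subtype.range_coe, hspan])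
  have hb : ⇑b = (↑) := Module.Basis.coe_mk hind _
  have hrepr : b.repr 1 = c := by rw [← hc, ← hb, b.repr_linearCombination]
  have hV : span ℚ (B \ {b₀}) = LinearMap.ker (b.coord ⟨b₀, hb₀⟩) := by
    rw [← b.span_image_compl_singleton, hb, Set.image_val_compl, Set.image_singleton]
  have hcompl := LinearMap.isCompl_ker_span_singleton (e := (1 : ℝ))
    (f := b.coord ⟨b₀, hb₀⟩) (by simpa [hrepr] using hc₀)
  intro x
  rw [hV]
  simpa [mem_span_singleton, Rat.smul_one_eq_cast, eq_comm] using
    existsUnique_mem_sub_mem_of_isCompl hcompl x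
end

section
/- Let σ assign to each pair (m, s), where m ∈ ℕ and s is a finite binary string (a list of Booleans), a finite binary string σ(m,s) (the 'stem'), subject to: (i) if s is an initial segment of t then σ(m,s) is an initial segment of σ(m,t); (ii) for every m and s, the strings σ(m, s⌢0) and σ(m, s⌢1) are incomparable (neither is an initial segment of the other) and each properly extends σ(m,s); (iii) for every n ∈ ℕ, whenever (m,s) ≠ (m',s') with m, m' < n and s, s' both of length n+1, the strings σ(m,s) and σ(m',s') are incomparable. For m ∈ ℕ and a finite binary string s, define A(m,s) to be the set of all finite binary strings u such that u is an initial segment of σ(m,t) for some t extending s. Then for all (m,s) and (m',s'): unless m = m' and one of s, s' is an initial segment of the other, the intersection A(m,s) ∩ A(m',s') is finite. -/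
/-- Two finite binary strings are incomparable: neither is a prefix of the other. -/
def Incomparable (u v : List Bool) : Prop := ¬ u <+: v ∧ ¬ v <+: u

/-!
Fix `n` above `m`, `m'` and the lengths of `s`, `s'`. Every `u ∈ A m s` is comparable with
`σ m w` for some `w ⊇ s` of length `n + 1` (pad or truncate the witness `t` and use
monotonicity). So a point of `A m s ∩ A m' s'` is either a prefix of one of the finitely many
stems `σ m w`, `σ m' w` with `w.length = n + 1`, or it extends both `σ m w` and `σ m' w'`;
in the latter case these stems are comparable, so condition (iii) forces `(m, w) = (m', w')`,
and then `s` and `s'` are comparable as prefixes of the same `w`.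
-/

variable {α β : Type*}

theorem List.finite_setOf_prefix (v : List α) : {u | u <+: v}.Finite :=
  v.inits.finite_toSet.subset fun u hu => (List.mem_inits u v).mpr hu

theorem not_incomparable_of_prefix_of_prefix {a b u : List Bool} (ha : a <+: u) (hb : b <+: u) :
    ¬ Incomparable a b := by
  rintro ⟨hab, hba⟩
  rcases List.prefix_or_prefix_of_prefix ha hb with h | h
  exacts [hab h, hba h]

theorem finite_of_forall_prefix_of_length_eq [Finite β] (f g : List β → List α) (N : ℕ)
    {S : Set (List α)} (hS : ∀ u ∈ S, ∃ w, w.length = N ∧ (u <+: f w ∨ u <+: g w)) :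
    S.Finite := by
  refine ((List.finite_length_eq β N).biUnion fun w _ =>
    (List.finite_setOf_prefix (f w)).union (List.finite_setOf_prefix (g w))).subset ?_
  intro u hu
  obtain ⟨w, hw, hu⟩ := hS u hu
  exact Set.mem_biUnion hw hu

theorem exists_length_eq_prefix_comparable (f : List β → List α)
    (hf : ∀ s t, s <+: t → f s <+: f t) (b : β) {s t : List β} {u : List α} {N : ℕ}
    (hs : s.length ≤ N) (hst : s <+: t) (hut : u <+: f t) :
    ∃ w, w.length = N ∧ s <+: w ∧ (u <+: f w ∨ f w <+: u) := by
  set t' := t ++ List.replicate N b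
  refine ⟨t'.take N, by simp [t'], ?_, ?_⟩
  · exact List.prefix_take_iff.mpr ⟨hst.trans (List.prefix_append _ _), hs⟩
  · exact List.prefix_or_prefix_of_prefix (hut.trans (hf _ _ (List.prefix_append _ _)))
      (hf _ _ (List.take_prefix _ _))

theorem fusion_branch_sets_almost_disjoint_general
    (σ : ℕ → List Bool → List Bool)
    (hmono : ∀ (m : ℕ) (s t : List Bool), s <+: t → σ m s <+: σ m t)
    (hinc : ∀ (n m m' : ℕ) (s s' : List Bool), m < n → m' < n →
      s.length = n + 1 → s'.length = n + 1 → (m, s) ≠ (m', s') →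
      Incomparable (σ m s) (σ m' s'))
    (A : ℕ → List Bool → Set (List Bool))
    (hA : ∀ (m : ℕ) (s : List Bool),
      A m s = {u : List Bool | ∃ t : List Bool, s <+: t ∧ u <+: σ m t}) :
    ∀ (m m' : ℕ) (s s' : List Bool),
      ¬ (m = m' ∧ (s <+: s' ∨ s' <+: s)) → (A m s ∩ A m' s').Finite := by
  intro m m' s s' hne
  set n := max (max m m') (max s.length s'.length) + 1
  refine finite_of_forall_prefix_of_length_eq (σ m) (σ m') (n + 1) ?_
  rintro u ⟨hu, hu'⟩
  rw [hA] at hu hu'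
  obtain ⟨t, hst, hut⟩ := hu
  obtain ⟨t', hst', hut'⟩ := hu'
  obtain ⟨w, hw, hsw, hu | hwu⟩ :=
    exists_length_eq_prefix_comparable (σ m) (hmono m) false (N := n + 1) (by omega) hst hut
  · exact ⟨w, hw, .inl hu⟩
  obtain ⟨w', hw', hsw', hu' | hwu'⟩ :=
    exists_length_eq_prefix_comparable (σ m') (hmono m') false (N := n + 1) (by omega) hst' hut'
  · exact ⟨w', hw', .inr hu'⟩
  have hmw : (m, w) = (m', w') := by
    by_contra hmw
    exact not_incomparable_of_prefix_of_prefix hwu hwu'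
      (hinc n m m' w w' (by omega) (by omega) hw hw' hmw)
  obtain ⟨rfl, rfl⟩ := Prod.mk.inj hmw
  exact absurd ⟨rfl, List.prefix_or_prefix_of_prefix hsw hsw'⟩ hne

/-- The key combinatorial fact about the fusion system of stems used in the construction
of Jensen's forcing: given stems `σ m s` satisfying monotonicity, splitting, and the
incomparability condition (iii), the "branches through `(m, s)`" sets
`A m s = {u | ∃ t ⊇ s, u <+: σ m t}` have pairwise finite intersections, except when
`m = m'` and `s`, `s'` are comparable. -/
theorem fusion_branch_sets_almost_disjoint
    (σ : ℕ → List Bool → List Bool)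
    (hmono : ∀ (m : ℕ) (s t : List Bool), s <+: t → σ m s <+: σ m t)
    (hsplit : ∀ (m : ℕ) (s : List Bool),
      Incomparable (σ m (s ++ [false])) (σ m (s ++ [true])) ∧
      (σ m s <+: σ m (s ++ [false]) ∧ σ m s ≠ σ m (s ++ [false])) ∧
      (σ m s <+: σ m (s ++ [true]) ∧ σ m s ≠ σ m (s ++ [true])))
    (hinc : ∀ (n m m' : ℕ) (s s' : List Bool), m < n → m' < n →
      s.length = n + 1 → s'.length = n + 1 → (m, s) ≠ (m', s') →
      Incomparable (σ m s) (σ m' s'))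
    (A : ℕ → List Bool → Set (List Bool))
    (hA : ∀ (m : ℕ) (s : List Bool),
      A m s = {u : List Bool | ∃ t : List Bool, s <+: t ∧ u <+: σ m t}) :
    ∀ (m m' : ℕ) (s s' : List Bool),
      ¬ (m = m' ∧ (s <+: s' ∨ s' <+: s)) → (A m s ∩ A m' s').Finite :=
  fusion_branch_sets_almost_disjoint_general σ hmono hinc A hA
end
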